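/- Let μ be a Radon measure on ℝ^m supported on Σ satisfying: for every compact K ⊆ Σ there is C_K with |μ(B(x,tr))/μ(B(x,r)) − t^n| ≤ C_K r^α for x ∈ K, t, r ∈ (0,1]. Let D(x) = lim_{r→0⁺} μ(B(x,r))/(ω_n r^n). Then log D is locally Hölder continuous with exponent α/(1+α): for every compact K ⊆ Σ there is C'_K such that |log D(x) − log D(y)| ≤ C'_K |x−y|^{α/(1+α)} for x, y ∈ K. -/

import Mathlib

open MeasureTheory Metric

/-- `ω_n`: the Lebesgue measure of the unit ball in `ℝ^n`. -/
noncomputable def omegaBall (n : ℕ) : ℝ :=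
  (MeasureTheory.volume (Metric.ball (0 : EuclideanSpace ℝ (Fin n)) 1)).toReal

/-!
Taking `t = 1/2` in the hypothesis, the density ratio `ρ(x, r) = μ(B(x, r)) / (ω_n rⁿ)`
satisfies `|log ρ(x, r/2) - log ρ(x, r)| ≲ rᵅ` for small `r`, uniformly on `K`. Summing this
geometric series along `r, r/2, r/4, …` shows that `D(x) > 0` and `|log D(x) - log ρ(x, r)| ≲ rᵅ`.
Since `B(x, r) ⊆ B(y, r + d)` with `d = |x - y|`, comparing the two points at scale `r` costs
`rᵅ + n log((r + d)/r) ≲ rᵅ + d/r`, and the choice `r = d^{1/(1+α)}` makes both terms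
`d^{α/(1+α)}`. Large distances are handled by the boundedness of `log D` on the compact `K`.
-/

open Filter Topology Real Set

theorem abs_log_le_two_mul_abs_sub_one {u : ℝ} (hu : 2⁻¹ ≤ u) : |log u| ≤ 2 * |u - 1| := by
  have hu₀ : 0 < u := lt_of_lt_of_le (by norm_num) hu
  have h_inv : |1 - u⁻¹| ≤ 2 * |u - 1| := by
    rw [show 1 - u⁻¹ = (u - 1) * u⁻¹ by field_simp, abs_mul, abs_inv, abs_of_pos hu₀,
      mul_comm]
    gcongr
    exact inv_le_of_inv_le₀ (by norm_num) hu
  rw [abs_le]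
  constructor
  · linarith [one_sub_inv_le_log_of_pos hu₀, neg_abs_le (1 - u⁻¹)]
  · linarith [log_le_sub_one_of_pos hu₀, le_abs_self (u - 1), abs_nonneg (u - 1)]

theorem abs_log_sub_log_le_of_mem_Icc {a b u v : ℝ} (ha : 0 < a) (hu : u ∈ Icc a b)
    (hv : v ∈ Icc a b) : |log u - log v| ≤ log b - log a := by
  have hlog : ∀ w ∈ Icc a b, log a ≤ log w ∧ log w ≤ log b := fun w hw =>
    ⟨log_le_log ha hw.1, log_le_log (ha.trans_le hw.1) hw.2⟩
  rw [abs_le]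
  constructor <;> linarith [hlog u hu, hlog v hv]

theorem pos_and_abs_log_sub_le_of_dyadic {g : ℝ → ℝ} {L r₀ A α : ℝ} (hα : 0 < α)
    (hg : Tendsto g (𝓝[>] 0) (𝓝 L)) (hpos : ∀ r ∈ Ioc 0 r₀, 0 < g r)
    (hstep : ∀ r ∈ Ioc 0 r₀, |log (g (2⁻¹ * r)) - log (g r)| ≤ A * r ^ α)
    {r : ℝ} (hr : r ∈ Ioc 0 r₀) :
    0 < L ∧ |log L - log (g r)| ≤ A / (1 - 2⁻¹ ^ α) * r ^ α := by
  set u : ℕ → ℝ := fun k => log (g (2⁻¹ ^ k * r))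
  have hscale : ∀ k : ℕ, 2⁻¹ ^ k * r ∈ Ioc 0 r₀ := fun k =>
    ⟨by have := hr.1; positivity,
      (mul_le_of_le_one_left hr.1.le (pow_le_one₀ (by norm_num) (by norm_num))).trans hr.2⟩
  have hθ : (2⁻¹ : ℝ) ^ α < 1 := rpow_lt_one (by norm_num) (by norm_num) hα
  have hu : ∀ k, dist (u k) (u (k + 1)) ≤ A * r ^ α * (2⁻¹ ^ α) ^ k := fun k => by
    have := hstep _ (hscale k)
    rw [mul_rpow (by positivity) hr.1.le, ← rpow_pow_comm (by norm_num)] at this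
    rw [dist_comm, dist_eq_norm, norm_eq_abs]
    simp only [u, pow_succ', mul_assoc]
    linarith
  obtain ⟨ℓ, hℓ⟩ := cauchySeq_tendsto_of_complete (cauchySeq_of_le_geometric _ _ hθ hu)
  have hdyadic : Tendsto (fun k : ℕ => 2⁻¹ ^ k * r) atTop (𝓝[>] 0) :=
    tendsto_nhdsWithin_of_tendsto_nhds_of_eventually_within _
      (by simpa using (tendsto_pow_atTop_nhds_zero_of_lt_one (r := (2⁻¹ : ℝ)) (by norm_num)
        (by norm_num)).mul_const r)
      (Eventually.of_forall fun k => (hscale k).1)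
  -- `L` is the exponential of the limit of `u`, hence positive
  have hL : L = exp ℓ := by
    refine tendsto_nhds_unique (hg.comp hdyadic) (((continuous_exp.tendsto ℓ).comp hℓ).congr ?_)
    exact fun k => exp_log (hpos _ (hscale k))
  subst hL
  refine ⟨exp_pos ℓ, ?_⟩
  have := dist_le_of_le_geometric_of_tendsto₀ _ _ hθ hu hℓ
  rw [log_exp, abs_sub_comm, ← norm_eq_abs, ← dist_eq_norm, div_mul_eq_mul_div]
  simpa [u] using this

theorem omegaBall_pos (n : ℕ) : 0 < omegaBall n :=
  ENNReal.toReal_pos (measure_ball_pos _ _ one_pos).ne' measure_ball_lt_top.ne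

section DensityRatio

variable {X : Type*} [PseudoMetricSpace X] [MeasurableSpace X]

noncomputable def densityRatio (μ : Measure X) (n : ℕ) (x : X) (r : ℝ) : ℝ :=
  (μ (ball x r)).toReal / (omegaBall n * r ^ n)

variable {μ : Measure X} {n : ℕ}

theorem densityRatio_mul_div_densityRatio (x : X) {t r : ℝ} (ht : t ≠ 0) (hr : r ≠ 0) :
    densityRatio μ n x (t * r) / densityRatio μ n x r
      = (μ (ball x (t * r))).toReal / (μ (ball x r)).toReal / t ^ n := by
  have := (omegaBall_pos n).ne'
  unfold densityRatio
  rw [mul_pow]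
  field_simp

theorem IsCompact.exists_pos_forall_le_measure_ball {K : Set X} (hK : IsCompact K) {r : ℝ}
    (hr : 0 < r) (hpos : ∀ x ∈ K, 0 < μ (ball x (r / 2))) :
    ∃ c > 0, ∀ x ∈ K, c ≤ μ (ball x r) := by
  obtain ⟨t, htK, hcover⟩ :=
    hK.elim_nhds_subcover (fun x => ball x (r / 2)) fun x _ => ball_mem_nhds x (half_pos hr)
  refine ⟨t.inf fun z => μ (ball z (r / 2)),
    (Finset.lt_inf_iff ENNReal.zero_lt_top).2 fun z hz => hpos z (htK z hz), fun x hx => ?_⟩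
  obtain ⟨z, hz, hxz⟩ := mem_iUnion₂.1 (hcover hx)
  refine (Finset.inf_le hz).trans (measure_mono (ball_subset_ball' ?_))
  rw [dist_comm]
  linarith [mem_ball.1 hxz]

variable [ProperSpace X] [IsLocallyFiniteMeasure μ]

theorem densityRatio_pos {x : X} {r : ℝ} (hr : 0 < r) (hμ : 0 < μ (ball x r)) :
    0 < densityRatio μ n x r :=
  div_pos (ENNReal.toReal_pos hμ.ne' measure_ball_lt_top.ne)
    (mul_pos (omegaBall_pos n) (pow_pos hr n))

theorem densityRatio_le_mul_densityRatio_add_dist (x y : X) {r : ℝ} (hr : 0 < r) :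
    densityRatio μ n x r ≤ ((r + dist x y) / r) ^ n * densityRatio μ n y (r + dist x y) := by
  have := omegaBall_pos n
  have hrd : 0 < r + dist x y := by positivity
  calc densityRatio μ n x r
      ≤ (μ (ball y (r + dist x y))).toReal / (omegaBall n * r ^ n) := by
        unfold densityRatio
        gcongr
        · exact measure_ball_lt_top.ne
        · exact ball_subset_ball' (by rw [dist_comm])
    _ = _ := by
        unfold densityRatio
        rw [div_pow]
        field_simp

theorem abs_log_densityRatio_half_sub_le {x : X} {r ε : ℝ} (hr : 0 < r)
    (hx : ∀ s > 0, 0 < μ (ball x s))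
    (hq : |(μ (ball x (2⁻¹ * r))).toReal / (μ (ball x r)).toReal - 2⁻¹ ^ n| ≤ ε)
    (hε : 2 ^ n * ε ≤ 2⁻¹) :
    |log (densityRatio μ n x (2⁻¹ * r)) - log (densityRatio μ n x r)| ≤ 2 ^ (n + 1) * ε := by
  have hq' : |densityRatio μ n x (2⁻¹ * r) / densityRatio μ n x r - 1| ≤ 2 ^ n * ε := by
    have h2 : (0 : ℝ) < 2⁻¹ ^ n := by positivity
    rw [densityRatio_mul_div_densityRatio x (by norm_num) hr.ne', div_sub_one h2.ne', abs_div,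
      abs_of_pos h2, div_le_iff₀ h2, mul_comm (2 ^ n : ℝ) ε, mul_assoc, ← mul_pow]
    simpa using hq
  rw [← log_div (densityRatio_pos (by positivity) (hx _ (by positivity))).ne'
    (densityRatio_pos hr (hx r hr)).ne']
  calc _ ≤ 2 * |densityRatio μ n x (2⁻¹ * r) / densityRatio μ n x r - 1| :=
        abs_log_le_two_mul_abs_sub_one (by linarith [(abs_le.1 hq').1])
    _ ≤ 2 ^ (n + 1) * ε := by rw [pow_succ]; linarith

theorem exists_abs_log_sub_log_densityRatio_le {K : Set X} {D : X → ℝ} {α C : ℝ}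
    (hα : 0 < α) (hpos : ∀ x ∈ K, ∀ r > 0, 0 < μ (ball x r))
    (hC : ∀ x ∈ K, ∀ r ∈ Ioc (0 : ℝ) 1,
      |(μ (ball x (2⁻¹ * r))).toReal / (μ (ball x r)).toReal - 2⁻¹ ^ n| ≤ C * r ^ α)
    (hD : ∀ x ∈ K, Tendsto (densityRatio μ n x) (𝓝[>] 0) (𝓝 (D x))) :
    ∃ A ≥ 0, ∃ r₀ ∈ Ioc (0 : ℝ) 1, ∀ x ∈ K, 0 < D x ∧
      ∀ r ∈ Ioc 0 r₀, |log (D x) - log (densityRatio μ n x r)| ≤ A * r ^ α := by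
  set C' := max C 0
  have hsmall : ∀ᶠ r in 𝓝[>] (0 : ℝ), r ∈ Ioc 0 1 ∧ 2 ^ n * (C' * r ^ α) ≤ 2⁻¹ := by
    have hlim : Tendsto (fun r : ℝ => 2 ^ n * (C' * r ^ α)) (𝓝[>] 0) (𝓝 0) := by
      have := ((continuousAt_rpow_const 0 α (Or.inr hα.le)).tendsto.const_mul C').const_mul
        ((2 : ℝ) ^ n)
      simpa [zero_rpow hα.ne'] using this.mono_left nhdsWithin_le_nhds
    filter_upwards [self_mem_nhdsWithin, Ioo_mem_nhdsGT one_pos,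
      hlim.eventually (ge_mem_nhds (by norm_num : (0 : ℝ) < 2⁻¹))] with r hr₀ hr₁ hr
    exact ⟨⟨hr₀, hr₁.2.le⟩, hr⟩
  obtain ⟨r₀, hr₀, hr₀_small⟩ := mem_nhdsGT_iff_exists_Ioc_subset.1 hsmall
  have hθ : (2⁻¹ : ℝ) ^ α ≤ 1 := rpow_le_one (by norm_num) (by norm_num) hα.le
  refine ⟨2 ^ (n + 1) * C' / (1 - 2⁻¹ ^ α), div_nonneg (by positivity) (sub_nonneg.2 hθ),
    r₀, (hr₀_small ⟨hr₀, le_rfl⟩).1, fun x hx => ?_⟩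
  have hstep : ∀ r ∈ Ioc 0 r₀,
      |log (densityRatio μ n x (2⁻¹ * r)) - log (densityRatio μ n x r)|
        ≤ 2 ^ (n + 1) * C' * r ^ α := fun r hr => by
    obtain ⟨hr₁, hr_small⟩ := hr₀_small hr
    rw [mul_assoc]
    refine abs_log_densityRatio_half_sub_le hr.1 (hpos x hx) ((hC x hx r hr₁).trans ?_)
      hr_small
    exact mul_le_mul_of_nonneg_right (le_max_left C 0) (rpow_nonneg hr.1.le α)
  have hdyadic (r : ℝ) (hr : r ∈ Ioc 0 r₀) := pos_and_abs_log_sub_le_of_dyadic hα (hD x hx)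
    (fun s hs => densityRatio_pos hs.1 (hpos x hx s hs.1)) hstep hr
  exact ⟨(hdyadic r₀ ⟨hr₀, le_rfl⟩).1, fun r hr => (hdyadic r hr).2⟩

theorem log_sub_log_le_of_dist_le {x y : X} {D : X → ℝ} {A α r₀ r : ℝ} (hA : 0 ≤ A)
    (hα : 0 ≤ α)
    (hx : ∀ s ∈ Ioc 0 r₀, |log (D x) - log (densityRatio μ n x s)| ≤ A * s ^ α)
    (hy : ∀ s ∈ Ioc 0 r₀, |log (D y) - log (densityRatio μ n y s)| ≤ A * s ^ α)
    (hμx : 0 < μ (ball x r)) (hμy : 0 < μ (ball y (r + dist x y)))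
    (hr : 0 < r) (hdr : dist x y ≤ r) (hr₀ : 2 * r ≤ r₀) :
    log (D x) - log (D y) ≤ A * (1 + 2 ^ α) * r ^ α + n * (dist x y / r) := by
  have hrd : 0 < r + dist x y := by positivity
  have hlog_ratio : log (densityRatio μ n x r)
      ≤ n * log ((r + dist x y) / r) + log (densityRatio μ n y (r + dist x y)) := by
    have := log_le_log (densityRatio_pos hr hμx)
      (densityRatio_le_mul_densityRatio_add_dist (μ := μ) (n := n) x y hr)
    rwa [log_mul (by positivity) (densityRatio_pos hrd hμy).ne', log_pow] at this
  have hlog_le : log ((r + dist x y) / r) ≤ dist x y / r := by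
    calc log ((r + dist x y) / r) ≤ (r + dist x y) / r - 1 :=
          log_le_sub_one_of_pos (by positivity)
      _ = dist x y / r := by field_simp; ring
  have hpow : A * (r + dist x y) ^ α ≤ A * (2 ^ α * r ^ α) := by
    rw [← mul_rpow (by norm_num) hr.le]
    gcongr
    linarith
  have hx_r := (abs_le.1 (hx r ⟨hr, by linarith⟩)).2
  have hy_rd := (abs_le.1 (hy (r + dist x y) ⟨hrd, by linarith⟩)).1
  have := mul_le_mul_of_nonneg_left hlog_le (Nat.cast_nonneg n)
  linarith

theorem exists_log_sub_log_le_of_isCompact {K : Set X} (hK : IsCompact K) {D : X → ℝ}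
    {A α r₀ : ℝ} (hr₀ : 0 < r₀) (hpos : ∀ x ∈ K, ∀ r > 0, 0 < μ (ball x r))
    (happrox : ∀ x ∈ K, |log (D x) - log (densityRatio μ n x r₀)| ≤ A * r₀ ^ α) :
    ∃ M, ∀ x ∈ K, ∀ y ∈ K, log (D x) - log (D y) ≤ M := by
  obtain ⟨c, hc, hc_le⟩ :=
    hK.exists_pos_forall_le_measure_ball hr₀ fun x hx => hpos x hx _ (half_pos hr₀)
  set w := omegaBall n * r₀ ^ n
  have hw : 0 < w := by have := omegaBall_pos n; positivity
  set b := (μ (cthickening r₀ K)).toReal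
  refine ⟨2 * (A * r₀ ^ α) + (log (b / w) - log (c.toReal / w)), fun x hx y hy => ?_⟩
  have hc_top : c ≠ ⊤ := ((hc_le x hx).trans_lt measure_ball_lt_top).ne
  have hmem : ∀ z ∈ K, densityRatio μ n z r₀ ∈ Icc (c.toReal / w) (b / w) := fun z hz => by
    refine ⟨div_le_div_of_nonneg_right (ENNReal.toReal_mono measure_ball_lt_top.ne (hc_le z hz))
      hw.le, div_le_div_of_nonneg_right (ENNReal.toReal_mono
        (hK.cthickening.measure_lt_top).ne (measure_mono ?_)) hw.le⟩
    exact (ball_subset_thickening hz r₀).trans (thickening_subset_cthickening _ _)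
  have hρ := abs_log_sub_log_le_of_mem_Icc (div_pos (ENNReal.toReal_pos hc.ne' hc_top) hw)
    (hmem x hx) (hmem y hy)
  linarith [(abs_le.1 (happrox x hx)).2, (abs_le.1 (happrox y hy)).1, (abs_le.1 hρ).2]

end DensityRatio

theorem exists_holder_of_forall_scale {X : Type*} [MetricSpace X] {K : Set X} {L : X → ℝ}
    {α r₁ A B M : ℝ} (hα : 0 < α) (hr₁ : 0 < r₁) (hr₁_le : r₁ ≤ 1)
    (hM : ∀ x ∈ K, ∀ y ∈ K, L x - L y ≤ M)
    (hscale : ∀ x ∈ K, ∀ y ∈ K, ∀ r ∈ Ioc 0 r₁, dist x y ≤ r →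
      L x - L y ≤ A * r ^ α + B * (dist x y / r)) :
    ∃ C, ∀ x ∈ K, ∀ y ∈ K, |L x - L y| ≤ C * dist x y ^ (α / (1 + α)) := by
  set β := α / (1 + α)
  have hβ : 0 < β := by positivity
  set δ := r₁ ^ (1 + α)
  have hδ : 0 < δ := by positivity
  set C := max (A + B) (M / δ ^ β)
  suffices key : ∀ x ∈ K, ∀ y ∈ K, L x - L y ≤ C * dist x y ^ β from
    ⟨C, fun x hx y hy => abs_sub_le_iff.2 ⟨key x hx y hy, dist_comm x y ▸ key y hy x hx⟩⟩
  intro x hx y hy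
  rcases (dist_nonneg : 0 ≤ dist x y).eq_or_lt with hd | hd
  · obtain rfl := dist_eq_zero.1 hd.symm
    simp [zero_rpow hβ.ne']
  rcases le_or_gt (dist x y) δ with hdδ | hδd
  · -- the scale `r = d ^ (1/(1+α))` balances `r ^ α` against `d / r`, both becoming `d ^ β`
    set d := dist x y
    set r := d ^ (1 + α)⁻¹
    have hr : 0 < r := by positivity
    have hrα : r ^ α = d ^ β := by rw [← rpow_mul hd.le, inv_mul_eq_div]
    have hdr : d / r = d ^ β := by
      rw [div_eq_iff hr.ne', ← rpow_add hd]
      conv_lhs => rw [← rpow_one d]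
      congr 1
      simp only [β]
      field_simp
      ring
    have hr₁' : r ≤ r₁ := by
      calc r ≤ δ ^ (1 + α)⁻¹ := rpow_le_rpow hd.le hdδ (by positivity)
        _ = r₁ := rpow_rpow_inv hr₁.le (by positivity)
    have hd_le_r : d ≤ r := by
      calc d = d ^ (1 : ℝ) := (rpow_one d).symm
        _ ≤ r := rpow_le_rpow_of_exponent_ge hd (hdδ.trans (rpow_le_one hr₁.le hr₁_le
            (by positivity))) (inv_le_one_of_one_le₀ (by linarith))
    calc L x - L y ≤ A * r ^ α + B * (d / r) := hscale x hx y hy r ⟨hr, hr₁'⟩ hd_le_r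
      _ = (A + B) * d ^ β := by rw [hrα, hdr]; ring
      _ ≤ C * d ^ β := by gcongr; exact le_max_left _ _
  · have hM₀ : 0 ≤ M := by simpa using hM x hx x hx
    calc L x - L y ≤ M := hM x hx y hy
      _ = M / δ ^ β * δ ^ β := by field_simp
      _ ≤ C * dist x y ^ β := by gcongr; exact le_max_right _ _

theorem stmt_2_general (m n : ℕ) (α : ℝ) (hα : 0 < α)
    (μ : Measure (EuclideanSpace ℝ (Fin m))) [IsLocallyFiniteMeasure μ]
    (S : Set (EuclideanSpace ℝ (Fin m)))
    (hS : S = {x | ∀ r > (0:ℝ), 0 < μ (ball x r)})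
    (h : ∀ K ⊆ S, IsCompact K → ∃ CK : ℝ,
      ∀ x ∈ K, ∀ t ∈ Set.Ioc (0:ℝ) 1, ∀ r ∈ Set.Ioc (0:ℝ) 1,
        |(μ (ball x (t * r))).toReal / (μ (ball x r)).toReal - t ^ n| ≤ CK * r ^ α)
    (D : EuclideanSpace ℝ (Fin m) → ℝ)
    (hD : ∀ x ∈ S,
      Filter.Tendsto (fun r : ℝ => (μ (ball x r)).toReal / (omegaBall n * r ^ n))
        (nhdsWithin 0 (Set.Ioi 0)) (nhds (D x))) :
    ∀ K ⊆ S, IsCompact K → ∃ C' : ℝ,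
      ∀ x ∈ K, ∀ y ∈ K,
        |Real.log (D x) - Real.log (D y)| ≤ C' * ‖x - y‖ ^ (α / (1 + α)) := by
  subst hS
  intro K hKS hK
  have hpos : ∀ x ∈ K, ∀ r > 0, 0 < μ (ball x r) := fun x hx => hKS hx
  obtain ⟨C, hC⟩ := h K hKS hK
  obtain ⟨A, hA, r₀, ⟨hr₀, hr₀_le⟩, happrox⟩ := exists_abs_log_sub_log_densityRatio_le hα hpos
    (fun x hx r hr => hC x hx 2⁻¹ ⟨by norm_num, by norm_num⟩ r hr) (fun x hx => hD x (hKS hx))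
  obtain ⟨M, hM⟩ := exists_log_sub_log_le_of_isCompact hK hr₀ hpos
    fun x hx => (happrox x hx).2 r₀ ⟨hr₀, le_rfl⟩
  obtain ⟨C', hC'⟩ := exists_holder_of_forall_scale hα (half_pos hr₀) (by linarith) hM
    fun x hx y hy r hr hdr => log_sub_log_le_of_dist_le hA hα.le (happrox x hx).2
      (happrox y hy).2 (hpos x hx r hr.1) (hpos y hy _ (add_pos_of_pos_of_nonneg hr.1 dist_nonneg))
      hr.1 hdr (by linarith [hr.2])
  exact ⟨C', fun x hx y hy => by simpa only [dist_eq_norm] using hC' x hx y hy⟩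

/-- the logarithm of the density `D` is locally Hölder continuous
with exponent `α/(1+α)`. -/
theorem stmt_2 (m n : ℕ) (hn : 0 < n) (α : ℝ) (hα : 0 < α)
    (μ : Measure (EuclideanSpace ℝ (Fin m))) [IsLocallyFiniteMeasure μ]
    (S : Set (EuclideanSpace ℝ (Fin m)))
    (hS : S = {x | ∀ r > (0:ℝ), 0 < μ (ball x r)})
    (h : ∀ K ⊆ S, IsCompact K → ∃ CK : ℝ,
      ∀ x ∈ K, ∀ t ∈ Set.Ioc (0:ℝ) 1, ∀ r ∈ Set.Ioc (0:ℝ) 1,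
        |(μ (ball x (t * r))).toReal / (μ (ball x r)).toReal - t ^ n| ≤ CK * r ^ α)
    (D : EuclideanSpace ℝ (Fin m) → ℝ)
    (hD : ∀ x ∈ S,
      Filter.Tendsto (fun r : ℝ => (μ (ball x r)).toReal / (omegaBall n * r ^ n))
        (nhdsWithin 0 (Set.Ioi 0)) (nhds (D x))) :
    ∀ K ⊆ S, IsCompact K → ∃ C' : ℝ,
      ∀ x ∈ K, ∀ y ∈ K,
        |Real.log (D x) - Real.log (D y)| ≤ C' * ‖x - y‖ ^ (α / (1 + α)) :=
  stmt_2_general m n α hα μ S hS h D hD
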